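/- Let Φ : [0,∞) → [0,∞) be a Young function with generalized inverse Φ⁻¹(s) := inf { r ≥ 0 : Φ(r) > s }. For every a ∈ ℝⁿ and r > 0, the characteristic function χ_{B(a,r)} of the open ball B(a,r) satisfies ‖χ_{B(a,r)}‖_{wL_Φ} = 1 / Φ⁻¹(1/|B(a,r)|), where |B(a,r)| is the Lebesgue measure of B(a,r). -/

import Mathlib

open MeasureTheory Filter Set
open scoped ENNReal

/-- A Young function: convex on `[0,∞)`, left-continuous, `Φ 0 = 0`,
`Φ t → ∞` as `t → ∞`, and taking values in `[0,∞)`. -/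
def IsYoungFunction (Φ : ℝ → ℝ) : Prop :=
  ConvexOn ℝ (Set.Ici 0) Φ ∧
  (∀ t : ℝ, 0 ≤ t → ContinuousWithinAt Φ (Set.Iic t) t) ∧
  Φ 0 = 0 ∧
  Tendsto Φ atTop atTop ∧
  ∀ t : ℝ, 0 ≤ t → 0 ≤ Φ t

/-- Generalized inverse `Φ⁻¹(s) = inf {r ≥ 0 : Φ r > s}`. -/
noncomputable def youngInv (Φ : ℝ → ℝ) (s : ℝ) : ℝ :=
  sInf {r : ℝ | 0 ≤ r ∧ s < Φ r}

/-- The weak Orlicz quasi-norm of `f` on `ℝⁿ`, valued in `ℝ≥0∞`. -/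
noncomputable def wLuxNorm {n : ℕ} (Φ : ℝ → ℝ) (f : EuclideanSpace ℝ (Fin n) → ℝ) : ℝ≥0∞ :=
  sInf (ENNReal.ofReal ''
    {b : ℝ | 0 < b ∧
      ∀ t : ℝ, 0 < t → ENNReal.ofReal (Φ t) * volume {x | t < |f x| / b} ≤ 1})

/-!
For `b > 0` the level set `{χ_S / b > t}` is `S` when `t < 1 / b` and empty otherwise, so
`b` is admissible iff `Φ t ≤ 1 / |S|` for all `t ∈ (0, 1 / b)`. Since `Φ` is nondecreasing and
left-continuous, `Φ t ≤ s ↔ t ≤ Φ⁻¹ s`, hence the admissible `b` form the ray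
`[1 / Φ⁻¹ (1 / |S|), ∞)`. Here `Φ⁻¹ s > 0` for `s > 0`, because convexity and `Φ 0 = 0` give
`Φ x ≤ x Φ 1` on `[0, 1]`.
-/

namespace IsYoungFunction

variable {Φ : ℝ → ℝ}

theorem apply_div_le_apply_div (hΦ : IsYoungFunction Φ) {x y : ℝ} (hx : 0 < x) (hxy : x ≤ y) :
    Φ x / x ≤ Φ y / y := by
  simpa [hΦ.2.2.1] using hΦ.1.secant_mono (a := 0) self_mem_Ici hx.le (hx.le.trans hxy)
    hx.ne' (hx.trans_le hxy).ne' hxy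

theorem monotoneOn (hΦ : IsYoungFunction Φ) : MonotoneOn Φ (Ici 0) := by
  intro x hx y hy hxy
  rcases (mem_Ici.1 hx).eq_or_lt with rfl | hx
  · rw [hΦ.2.2.1]; exact hΦ.2.2.2.2 y hy
  have hy : 0 < y := hx.trans_le hxy
  calc Φ x = x * (Φ x / x) := (mul_div_cancel₀ _ hx.ne').symm
    _ ≤ y * (Φ y / y) := mul_le_mul hxy (hΦ.apply_div_le_apply_div hx hxy)
        (div_nonneg (hΦ.2.2.2.2 x hx.le) hx.le) hy.le
    _ = Φ y := mul_div_cancel₀ _ hy.ne'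

theorem exists_lt_of_lt_apply (hΦ : IsYoungFunction Φ) {s t : ℝ} (ht : 0 < t)
    (h : s < Φ t) : ∃ t' ∈ Ioo 0 t, s < Φ t' :=
  (((hΦ.2.1 t ht.le).mono Iio_subset_Iic_self).eventually (lt_mem_nhds h)
    |>.and (Ioo_mem_nhdsLT ht)).exists.imp fun _ h => ⟨h.2, h.1⟩

theorem apply_le_iff_le_youngInv (hΦ : IsYoungFunction Φ) {s x : ℝ} (hs : 0 ≤ s)
    (hx : 0 ≤ x) : Φ x ≤ s ↔ x ≤ youngInv Φ s := by
  have hbdd : BddBelow {r : ℝ | 0 ≤ r ∧ s < Φ r} := ⟨0, fun r hr => hr.1⟩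
  constructor
  · intro h
    obtain ⟨r, hr⟩ := ((hΦ.2.2.2.1.eventually_gt_atTop s).and (eventually_ge_atTop 0)).exists
    refine le_csInf ⟨r, hr.2, hr.1⟩ fun r hr => ?_
    by_contra! hrx
    exact (h.trans_lt hr.2).not_ge (hΦ.monotoneOn hr.1 hx hrx.le)
  · intro h
    by_contra! hsx
    have hx : 0 < x := hx.lt_of_ne (by rintro rfl; linarith [hΦ.2.2.1])
    obtain ⟨t, ht, hst⟩ := hΦ.exists_lt_of_lt_apply hx hsx
    exact ht.2.not_ge (h.trans (csInf_le hbdd ⟨ht.1.le, hst⟩))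

theorem youngInv_pos (hΦ : IsYoungFunction Φ) {s : ℝ} (hs : 0 < s) : 0 < youngInv Φ s := by
  have hΦ1 : 0 ≤ Φ 1 := hΦ.2.2.2.2 1 zero_le_one
  set x := s / (Φ 1 + s)
  have hx : 0 < x := by positivity
  have hx1 : x ≤ 1 := (div_le_one (by positivity)).2 (by linarith)
  have hΦx : Φ x ≤ s :=
    calc Φ x ≤ x * Φ 1 := by
          simpa [div_le_iff₀ hx, mul_comm] using hΦ.apply_div_le_apply_div hx hx1
      _ = s * (Φ 1 / (Φ 1 + s)) := by ring
      _ ≤ s * 1 := by gcongr; exact (div_le_one (by positivity)).2 (by linarith)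
      _ = s := mul_one s
  exact hx.trans_le ((hΦ.apply_le_iff_le_youngInv hs.le hx.le).1 hΦx)

theorem forall_apply_le_iff_le_youngInv (hΦ : IsYoungFunction Φ) {s u : ℝ} (hs : 0 ≤ s) :
    (∀ t, 0 < t → t < u → Φ t ≤ s) ↔ u ≤ youngInv Φ s := by
  constructor
  · intro h
    refine le_of_forall_lt_imp_le_of_dense fun t htu => ?_
    rcases le_or_gt t 0 with ht | ht
    · exact ht.trans (Real.sInf_nonneg fun r hr => hr.1)
    · exact (hΦ.apply_le_iff_le_youngInv hs ht.le).1 (h t ht htu)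
  · exact fun h t ht htu => (hΦ.apply_le_iff_le_youngInv hs ht.le).2 (htu.le.trans h)

end IsYoungFunction

theorem setOf_lt_abs_indicator_one_div {α : Type*} (S : Set α) {t : ℝ} (ht : 0 ≤ t) (b : ℝ) :
    {x | t < |S.indicator (fun _ => (1 : ℝ)) x| / b} = if t < b⁻¹ then S else ∅ := by
  ext x
  by_cases hx : x ∈ S <;> split_ifs <;> simp [ht.not_gt, *]

theorem ENNReal.ofReal_mul_le_one_iff {V : ℝ≥0∞} (h0 : V ≠ 0) (htop : V ≠ ⊤) (y : ℝ) :
    ENNReal.ofReal y * V ≤ 1 ↔ y ≤ V.toReal⁻¹ := by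
  rw [← ENNReal.le_div_iff_mul_le (Or.inl h0) (Or.inl htop), one_div,
    ← ENNReal.ofReal_toReal (ENNReal.inv_ne_top.2 h0), ENNReal.toReal_inv,
    ENNReal.ofReal_le_ofReal_iff (by positivity)]

theorem ENNReal.sInf_ofReal_image_Ici (x : ℝ) :
    sInf (ENNReal.ofReal '' Ici x) = ENNReal.ofReal x :=
  (ENNReal.ofReal_mono.map_isLeast isLeast_Ici).csInf_eq

theorem wLuxNorm_indicator_one {n : ℕ} {Φ : ℝ → ℝ} (hΦ : IsYoungFunction Φ)
    {S : Set (EuclideanSpace ℝ (Fin n))} (h0 : volume S ≠ 0) (htop : volume S ≠ ⊤) :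
    wLuxNorm Φ (S.indicator fun _ => (1 : ℝ)) =
      ENNReal.ofReal (1 / youngInv Φ (1 / (volume S).toReal)) := by
  rw [one_div, one_div]
  set s := (volume S).toReal⁻¹
  have hs : 0 < s := inv_pos.2 (ENNReal.toReal_pos h0 htop)
  have hc := hΦ.youngInv_pos hs
  have hcond : ∀ b, 0 < b → ((∀ t : ℝ, 0 < t → ENNReal.ofReal (Φ t) *
      volume {x | t < |S.indicator (fun _ => (1 : ℝ)) x| / b} ≤ 1) ↔ b⁻¹ ≤ youngInv Φ s) := by
    intro b hb
    rw [← hΦ.forall_apply_le_iff_le_youngInv hs.le]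
    refine forall₂_congr fun t ht => ?_
    rw [setOf_lt_abs_indicator_one_div S ht.le b]
    split_ifs with htb
    · simp only [htb, ENNReal.ofReal_mul_le_one_iff h0 htop, true_imp_iff, s]
    · simp [htb]
  have hset : {b : ℝ | 0 < b ∧ ∀ t : ℝ, 0 < t → ENNReal.ofReal (Φ t) *
      volume {x | t < |S.indicator (fun _ => (1 : ℝ)) x| / b} ≤ 1} = Ici (youngInv Φ s)⁻¹ := by
    ext b
    refine ⟨fun ⟨hb, h⟩ => (inv_le_comm₀ hb hc).1 ((hcond b hb).1 h), fun h => ?_⟩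
    have hb : 0 < b := (inv_pos.2 hc).trans_le h
    exact ⟨hb, (hcond b hb).2 ((inv_le_comm₀ hb hc).2 h)⟩
  rw [wLuxNorm, hset, ENNReal.sInf_ofReal_image_Ici]

theorem wLuxNorm_indicator_ball_general {n : ℕ} (Φ : ℝ → ℝ)
    (hΦ : IsYoungFunction Φ) (a : EuclideanSpace ℝ (Fin n)) (r : ℝ) (hr : 0 < r) :
    wLuxNorm Φ ((Metric.ball a r).indicator fun _ => (1 : ℝ)) =
      ENNReal.ofReal (1 / youngInv Φ (1 / (volume (Metric.ball a r)).toReal)) :=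
  wLuxNorm_indicator_one hΦ (Metric.measure_ball_pos volume a hr).ne' measure_ball_lt_top.ne

theorem wLuxNorm_indicator_ball {n : ℕ} (hn : 0 < n) (Φ : ℝ → ℝ)
    (hΦ : IsYoungFunction Φ) (a : EuclideanSpace ℝ (Fin n)) (r : ℝ) (hr : 0 < r) :
    wLuxNorm Φ ((Metric.ball a r).indicator fun _ => (1 : ℝ)) =
      ENNReal.ofReal (1 / youngInv Φ (1 / (volume (Metric.ball a r)).toReal)) :=
  wLuxNorm_indicator_ball_general Φ hΦ a r hr
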